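/- Let p ∈ [0,1] and assume ∫_0^∞ t^p φ(t) dt < ∞ componentwise. Then ∫_0^∞ t^p ψ(t) dt ≤ (Id−K)^{-1} (∫_0^∞ t^p φ(t) dt) (Id−K)^{-1} componentwise, with equality when p = 1. -/

import Mathlib

open MeasureTheory Set Filter Topology

noncomputable section

/-- `phiIter d φ n` is the `(n+1)`-fold convolution `φ_{n+1}` of the kernel matrix:
`φ_1 = φ` and `φ_{n+1}(t) = ∫_0^t φ(t−s) φ_n(s) ds`. -/
def phiIter (d : ℕ) (φ : Fin d → Fin d → ℝ → ℝ) : ℕ → Fin d → Fin d → ℝ → ℝ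
  | 0 => φ
  | n + 1 => fun i j t => ∑ k, ∫ s in Ioc (0 : ℝ) t, φ i k (t - s) * phiIter d φ n k j s

/-- `ψ = Σ_{n ≥ 1} φ_n`. -/
def psiFun (d : ℕ) (φ : Fin d → Fin d → ℝ → ℝ) (i j : Fin d) (t : ℝ) : ℝ :=
  ∑' n, phiIter d φ n i j t

/-- The matrix `K = ∫_0^∞ φ(t) dt`. -/
def Kmat (d : ℕ) (φ : Fin d → Fin d → ℝ → ℝ) : Matrix (Fin d) (Fin d) ℝ :=
  Matrix.of fun i j => ∫ t in Ioi (0 : ℝ), φ i j t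

/-- Assumption (A1): the kernels are integrable and the spectral radius of `K`
is strictly less than one. -/
def A1 (d : ℕ) (φ : Fin d → Fin d → ℝ → ℝ) : Prop :=
  (∀ i j, IntegrableOn (φ i j) (Ioi 0)) ∧
    spectralRadius ℂ ((Kmat d φ).map fun x : ℝ => (x : ℂ)) < 1

open scoped ENNReal
open Finset.HasAntidiagonal

/-!
Everything is transported to `ℝ≥0∞`, where Tonelli's theorem applies without integrability
side conditions. There the `(n + 1)`-fold convolution power `Φₙ` of `Φ = ofReal ∘ φ` has mass
matrix `K ^ (n + 1)`, and since `t ↦ t ^ p` is subadditive for `p ∈ [0, 1]` (additive for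
`p = 1`), the moment matrices `Mₙ = ∫ t ^ p Φₙ(t) dt` satisfy `Mₙ₊₁ ≤ M₀ K ^ (n + 1) + K Mₙ`,
i.e. `Mₙ ≤ ∑_{a + b = n} K ^ a M₀ K ^ b`, with equality when `p = 1`. Summing over `n` gives
`(∑ K ^ a) M₀ (∑ K ^ b)`, and the Gelfand formula turns `ρ(K) < 1` into convergence of the
Neumann series `∑ K ^ n = (1 - K)⁻¹`. Finally, because all masses are finite, the real
convolution powers `φₙ` agree almost everywhere with `Φₙ`.
-/

theorem ENNReal.ofReal_tsum_le {α : Type*} {f : α → ℝ} (hf : ∀ a, 0 ≤ f a) :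
    ENNReal.ofReal (∑' a, f a) ≤ ∑' a, ENNReal.ofReal (f a) := by
  by_cases hs : Summable f
  · exact (ENNReal.ofReal_tsum_of_nonneg hf hs).le
  · simp [tsum_eq_zero_of_not_summable hs]

theorem ENNReal.ofReal_tsum_of_tsum_ne_top {α : Type*} {f : α → ℝ} (hf : ∀ a, 0 ≤ f a)
    (htop : ∑' a, ENNReal.ofReal (f a) ≠ ⊤) :
    ENNReal.ofReal (∑' a, f a) = ∑' a, ENNReal.ofReal (f a) := by
  refine ENNReal.ofReal_tsum_of_nonneg hf ?_
  simpa only [ENNReal.toReal_ofReal (hf _)] using ENNReal.summable_toReal htop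

theorem ENNReal.ofReal_rpow_le_ofReal_rpow_sub_add {p : ℝ} (hp : p ∈ Icc (0 : ℝ) 1) {s t : ℝ}
    (hs : 0 < s) (hst : s ≤ t) :
    ENNReal.ofReal (t ^ p) ≤ ENNReal.ofReal ((t - s) ^ p) + ENNReal.ofReal (s ^ p) := by
  rw [← ENNReal.ofReal_add (Real.rpow_nonneg (sub_nonneg.2 hst) p) (Real.rpow_nonneg hs.le p)]
  refine ENNReal.ofReal_le_ofReal ?_
  simpa using Real.rpow_add_le_add_rpow (sub_nonneg.2 hst) hs.le hp.1 hp.2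

theorem ENNReal.tsum_tsum_eq_tsum_sum_antidiagonal (f : ℕ → ℕ → ℝ≥0∞) :
    ∑' a, ∑' b, f a b = ∑' n, ∑ x ∈ antidiagonal n, f x.1 x.2 := by
  rw [← ENNReal.tsum_prod, ← Finset.HasAntidiagonal.sigmaAntidiagonalEquivProd.tsum_eq,
    ENNReal.tsum_sigma']
  exact tsum_congr fun n => (Finset.tsum_subtype (antidiagonal n) fun x => f x.1 x.2)

theorem sum_antidiagonal_succ_pow_mul_pow {R : Type*} [Semiring R] (a b : R) (n : ℕ) :
    ∑ x ∈ antidiagonal (n + 1), a ^ x.1 * b * a ^ x.2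
      = b * a ^ (n + 1) + a * ∑ x ∈ antidiagonal n, a ^ x.1 * b * a ^ x.2 := by
  simp_rw [Finset.Nat.sum_antidiagonal_succ, Finset.mul_sum, pow_zero, one_mul, pow_succ',
    mul_assoc]

theorem summable_pow_of_spectralRadius_lt_one {A : Type*} [NormedRing A] [NormedAlgebra ℂ A]
    [CompleteSpace A] {a : A} (h : spectralRadius ℂ a < 1) : Summable (a ^ ·) := by
  obtain ⟨r, hρr, hr1⟩ := ENNReal.lt_iff_exists_nnreal_btwn.mp h
  have hbound : ∀ᶠ n : ℕ in atTop, ‖a ^ n‖ ≤ (r : ℝ) ^ n := by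
    have hgelfand := spectrum.pow_norm_pow_one_div_tendsto_nhds_spectralRadius a
    filter_upwards [hgelfand.eventually_lt_const hρr, eventually_gt_atTop 0] with n hn hn0
    rw [ENNReal.ofReal_lt_iff_lt_toReal (by positivity) ENNReal.coe_ne_top, ENNReal.coe_toReal,
      one_div, Real.rpow_inv_lt_iff_of_pos (norm_nonneg _) r.coe_nonneg (by exact_mod_cast hn0),
      Real.rpow_natCast] at hn
    exact hn.le
  exact .of_norm_bounded_eventually_nat
    (summable_geometric_of_lt_one r.coe_nonneg (by exact_mod_cast hr1)) hbound

namespace Matrix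

theorem ennreal_tsum_apply {ι α : Type*} (X : α → Matrix ι ι ℝ≥0∞) (i j : ι) :
    (∑' a, X a) i j = ∑' a, X a i j :=
  (congrFun (tsum_apply (Pi.summable.2 fun _ => Pi.summable.2 fun _ => ENNReal.summable)) j).trans
    (tsum_apply (Pi.summable.2 fun _ => ENNReal.summable))

variable {ι : Type*} [Fintype ι]

theorem ennreal_tsum_mul {α : Type*} (X : α → Matrix ι ι ℝ≥0∞) (Y : Matrix ι ι ℝ≥0∞) :
    (∑' a, X a) * Y = ∑' a, X a * Y := by
  ext i j
  simp only [mul_apply, ennreal_tsum_apply, ← ENNReal.tsum_mul_right]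
  exact (Summable.tsum_finsetSum fun _ _ => ENNReal.summable).symm

theorem ennreal_mul_tsum {α : Type*} (X : α → Matrix ι ι ℝ≥0∞) (Y : Matrix ι ι ℝ≥0∞) :
    Y * ∑' a, X a = ∑' a, Y * X a := by
  ext i j
  simp only [mul_apply, ennreal_tsum_apply, ← ENNReal.tsum_mul_left]
  exact (Summable.tsum_finsetSum fun _ _ => ENNReal.summable).symm

theorem mul_apply_nonneg {A B : Matrix ι ι ℝ} (hA : ∀ i j, 0 ≤ A i j) (hB : ∀ i j, 0 ≤ B i j)
    (i j : ι) : 0 ≤ (A * B) i j :=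
  Finset.sum_nonneg fun k _ => mul_nonneg (hA i k) (hB k j)

theorem map_ofReal_mul {A B : Matrix ι ι ℝ} (hA : ∀ i j, 0 ≤ A i j) (hB : ∀ i j, 0 ≤ B i j) :
    (A * B).map ENNReal.ofReal = A.map ENNReal.ofReal * B.map ENNReal.ofReal := by
  ext i j
  simp only [map_apply, mul_apply]
  rw [ENNReal.ofReal_sum_of_nonneg fun k _ => mul_nonneg (hA i k) (hB k j)]
  exact Finset.sum_congr rfl fun k _ => ENNReal.ofReal_mul (hA i k)

variable [DecidableEq ι]

theorem summable_pow_of_spectralRadius_map_lt_one {K : Matrix ι ι ℝ}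
    (h : spectralRadius ℂ (K.map fun x : ℝ => (x : ℂ)) < 1) : Summable (K ^ ·) := by
  -- `spectralRadius` is purely algebraic, so any Banach algebra norm on complex matrices will do.
  let := Matrix.linftyOpNormedRing (n := ι) (α := ℂ)
  let := Matrix.linftyOpNormedAlgebra (R := ℂ) (n := ι) (α := ℂ)
  have hre : ∀ k : ℕ, Complex.reAddGroupHom.mapMatrix ((K.map fun x : ℝ => (x : ℂ)) ^ k) = K ^ k :=
    fun k => by
      change Complex.reAddGroupHom.mapMatrix (Complex.ofRealHom.mapMatrix K ^ k) = _
      rw [← map_pow]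
      ext i j
      simp
  convert (summable_pow_of_spectralRadius_lt_one h).map Complex.reAddGroupHom.mapMatrix
    (continuous_id.matrix_map Complex.continuous_re) using 1
  exact funext fun k => (hre k).symm

theorem inv_one_sub_eq_tsum_pow {K : Matrix ι ι ℝ} (hK : Summable (K ^ ·)) :
    (1 - K)⁻¹ = ∑' k, K ^ k :=
  inv_eq_right_inv hK.one_sub_mul_tsum_pow

theorem tsum_pow_apply {A : Matrix ι ι ℝ} (hs : Summable (A ^ ·)) (i j : ι) :
    (∑' n, A ^ n) i j = ∑' n, (A ^ n) i j :=
  (congrFun (tsum_apply hs) j).trans (tsum_apply (Pi.summable.1 hs i))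

theorem map_ofReal_pow {A : Matrix ι ι ℝ} (hA : ∀ i j, 0 ≤ A i j) (n : ℕ) :
    (A ^ n).map ENNReal.ofReal = A.map ENNReal.ofReal ^ n := by
  induction n with
  | zero => ext i j; by_cases h : i = j <;> simp [h]
  | succ n ih => rw [pow_succ, map_ofReal_mul (pow_apply_nonneg hA n) hA, ih, pow_succ]

theorem map_ofReal_tsum_pow {A : Matrix ι ι ℝ} (hA : ∀ i j, 0 ≤ A i j) (hs : Summable (A ^ ·)) :
    (∑' n, A ^ n).map ENNReal.ofReal = ∑' n, A.map ENNReal.ofReal ^ n := by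
  ext i j
  rw [map_apply, tsum_pow_apply hs, ennreal_tsum_apply,
    ENNReal.ofReal_tsum_of_nonneg (fun n => pow_apply_nonneg hA n i j)
      (Pi.summable.1 (Pi.summable.1 hs i) j)]
  exact tsum_congr fun n => by rw [← map_ofReal_pow hA]; rfl

theorem ennreal_tsum_pow_mul_mul_tsum_pow (A B : Matrix ι ι ℝ≥0∞) :
    (∑' a, A ^ a) * B * ∑' b, A ^ b = ∑' n, ∑ x ∈ antidiagonal n, A ^ x.1 * B * A ^ x.2 := by
  ext i j
  simp_rw [ennreal_tsum_mul, ennreal_mul_tsum, ennreal_tsum_apply, sum_apply]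
  exact ENNReal.tsum_tsum_eq_tsum_sum_antidiagonal fun a b => (A ^ a * B * A ^ b) i j

theorem map_ofReal_inv_one_sub_mul_mul_inv_one_sub {K B : Matrix ι ι ℝ} (hK : ∀ i j, 0 ≤ K i j)
    (hB : ∀ i j, 0 ≤ B i j) (hs : Summable (K ^ ·)) :
    ((1 - K)⁻¹ * B * (1 - K)⁻¹).map ENNReal.ofReal
      = ∑' n, ∑ x ∈ antidiagonal n,
          K.map ENNReal.ofReal ^ x.1 * B.map ENNReal.ofReal * K.map ENNReal.ofReal ^ x.2 := by
  have hS : ∀ i j, 0 ≤ (∑' n, K ^ n) i j := fun i j => by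
    rw [tsum_pow_apply hs]
    exact tsum_nonneg fun n => pow_apply_nonneg hK n i j
  rw [inv_one_sub_eq_tsum_pow hs, map_ofReal_mul (mul_apply_nonneg hS hB) hS, map_ofReal_mul hS hB,
    map_ofReal_tsum_pow hK hs, ennreal_tsum_pow_mul_mul_tsum_pow]

end Matrix

def halfConv (f g : ℝ → ℝ≥0∞) (t : ℝ) : ℝ≥0∞ :=
  ∫⁻ s in Ioc 0 t, f (t - s) * g s

section HalfConv

variable {f g : ℝ → ℝ≥0∞}

theorem halfConv_eq_setLIntegral_Ioi (f g : ℝ → ℝ≥0∞) (t : ℝ) :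
    halfConv f g t = ∫⁻ s in Ioi 0, (Ici 0).indicator f (t - s) * g s := by
  have : ∀ s, (Ici 0).indicator f (t - s) * g s = (Iic t).indicator (fun s => f (t - s) * g s) s :=
    fun s => by by_cases hs : s ≤ t <;> simp [indicator, hs]
  simp_rw [this, lintegral_indicator measurableSet_Iic, Measure.restrict_restrict measurableSet_Iic,
    Iic_inter_Ioi, halfConv]

theorem Measurable.halfConv (hf : Measurable f) (hg : Measurable g) :
    Measurable (halfConv f g) := by
  simp_rw [funext (halfConv_eq_setLIntegral_Ioi f g)]
  exact Measurable.lintegral_prod_right'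
    (((hf.indicator measurableSet_Ici).comp (measurable_fst.sub measurable_snd)).mul
      (hg.comp measurable_snd))

theorem halfConv_congr_ae {g' : ℝ → ℝ≥0∞} (h : g =ᵐ[volume.restrict (Ioi 0)] g') (t : ℝ) :
    halfConv f g t = halfConv f g' t :=
  lintegral_congr_ae <| (ae_restrict_of_ae_restrict_of_subset Ioc_subset_Ioi_self h).mono
    fun s hs => by simp only [hs]

theorem lintegral_halfConv (hf : Measurable f) (hg : Measurable g) :
    ∫⁻ t in Ioi 0, halfConv f g t = (∫⁻ t in Ioi 0, f t) * ∫⁻ t in Ioi 0, g t := by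
  set F := (Ici (0 : ℝ)).indicator f
  have hF : Measurable F := hf.indicator measurableSet_Ici
  have hshift : ∀ s ∈ Ioi (0 : ℝ), ∫⁻ t in Ioi 0, F (t - s) = ∫⁻ t in Ioi 0, f t := by
    intro s hs
    rw [setLIntegral_eq_of_support_subset, lintegral_sub_right_eq_self,
      lintegral_indicator measurableSet_Ici, ← Measure.restrict_congr_set Ioi_ae_eq_Ici]
    intro t ht
    by_contra h
    exact ht (indicator_of_notMem (by simp at h ⊢; linarith [mem_Ioi.1 hs]) f)
  calc ∫⁻ t in Ioi 0, halfConv f g t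
      = ∫⁻ s in Ioi 0, ∫⁻ t in Ioi 0, F (t - s) * g s := by
        simp_rw [halfConv_eq_setLIntegral_Ioi]
        exact lintegral_lintegral_swap
          ((hF.comp (measurable_fst.sub measurable_snd)).mul (hg.comp measurable_snd)).aemeasurable
    _ = ∫⁻ s in Ioi 0, (∫⁻ t in Ioi 0, f t) * g s := by
        refine setLIntegral_congr_fun measurableSet_Ioi fun s hs => ?_
        rw [lintegral_mul_const _ (by fun_prop), hshift s hs]
    _ = _ := lintegral_const_mul _ hg

theorem lintegral_weight_mul_halfConv (w : ℝ → ℝ≥0∞) (hw : Measurable w) (hf : Measurable f)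
    (hg : Measurable g) :
    ∫⁻ t in Ioi 0, ∫⁻ s in Ioc 0 t, (w (t - s) + w s) * (f (t - s) * g s)
      = (∫⁻ t in Ioi 0, w t * f t) * (∫⁻ t in Ioi 0, g t)
        + (∫⁻ t in Ioi 0, f t) * ∫⁻ t in Ioi 0, w t * g t := by
  have hsplit : ∀ t, ∫⁻ s in Ioc 0 t, (w (t - s) + w s) * (f (t - s) * g s)
      = halfConv (w * f) g t + halfConv f (w * g) t := fun t => by
    rw [halfConv, halfConv, ← lintegral_add_left (by fun_prop)]
    exact lintegral_congr fun s => by simp only [Pi.mul_apply]; ring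
  simp_rw [hsplit]
  rw [lintegral_add_left ((hw.mul hf).halfConv hg), lintegral_halfConv (hw.mul hf) hg,
    lintegral_halfConv hf (hw.mul hg)]
  rfl

theorem lintegral_mul_halfConv_le (w : ℝ → ℝ≥0∞) (hw : Measurable w) (hf : Measurable f)
    (hg : Measurable g) (hsub : ∀ s t, 0 < s → s ≤ t → w t ≤ w (t - s) + w s) :
    ∫⁻ t in Ioi 0, w t * halfConv f g t
      ≤ (∫⁻ t in Ioi 0, w t * f t) * (∫⁻ t in Ioi 0, g t)
        + (∫⁻ t in Ioi 0, f t) * ∫⁻ t in Ioi 0, w t * g t := by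
  rw [← lintegral_weight_mul_halfConv w hw hf hg]
  refine lintegral_mono fun t => ?_
  rw [halfConv, ← lintegral_const_mul _ (by fun_prop)]
  exact setLIntegral_mono' measurableSet_Ioc fun s hs => mul_le_mul_left (hsub s t hs.1 hs.2) _

theorem lintegral_mul_halfConv_eq (w : ℝ → ℝ≥0∞) (hw : Measurable w) (hf : Measurable f)
    (hg : Measurable g) (hadd : ∀ s t, 0 < s → s ≤ t → w t = w (t - s) + w s) :
    ∫⁻ t in Ioi 0, w t * halfConv f g t
      = (∫⁻ t in Ioi 0, w t * f t) * (∫⁻ t in Ioi 0, g t)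
        + (∫⁻ t in Ioi 0, f t) * ∫⁻ t in Ioi 0, w t * g t := by
  rw [← lintegral_weight_mul_halfConv w hw hf hg]
  refine lintegral_congr fun t => ?_
  rw [halfConv, ← lintegral_const_mul _ (by fun_prop)]
  exact setLIntegral_congr_fun measurableSet_Ioc fun s hs => by rw [hadd s t hs.1 hs.2]

end HalfConv

def halfConvIter {ι : Type*} [Fintype ι] (Φ : ι → ι → ℝ → ℝ≥0∞) : ℕ → ι → ι → ℝ → ℝ≥0∞
  | 0 => Φ
  | n + 1 => fun i j t => ∑ k, halfConv (Φ i k) (halfConvIter Φ n k j) t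

def massMatrix {ι : Type*} (Φ : ι → ι → ℝ → ℝ≥0∞) : Matrix ι ι ℝ≥0∞ :=
  Matrix.of fun i j => ∫⁻ t in Ioi 0, Φ i j t

def momentMatrix {ι : Type*} (w : ℝ → ℝ≥0∞) (Φ : ι → ι → ℝ → ℝ≥0∞) : Matrix ι ι ℝ≥0∞ :=
  Matrix.of fun i j => ∫⁻ t in Ioi 0, w t * Φ i j t

namespace halfConvIter

variable {ι : Type*} [Fintype ι] {Φ : ι → ι → ℝ → ℝ≥0∞}

theorem measurable (hΦ : ∀ i j, Measurable (Φ i j)) (n : ℕ) (i j : ι) :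
    Measurable (halfConvIter Φ n i j) := by
  induction n generalizing i j with
  | zero => exact hΦ i j
  | succ n ih => exact Finset.measurable_sum _ fun k _ => (hΦ i k).halfConv (ih k j)

theorem momentMatrix_succ_apply (w : ℝ → ℝ≥0∞) (hw : Measurable w) (hΦ : ∀ i j, Measurable (Φ i j))
    (n : ℕ) (i j : ι) :
    momentMatrix w (halfConvIter Φ (n + 1)) i j
      = ∑ k, ∫⁻ t in Ioi 0, w t * halfConv (Φ i k) (halfConvIter Φ n k j) t := by
  simp_rw [momentMatrix, Matrix.of_apply, halfConvIter, Finset.mul_sum]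
  exact lintegral_finsetSum _ fun k _ => hw.mul ((hΦ i k).halfConv (measurable hΦ n k j))

theorem lintegral_mul_tsum {w : ℝ → ℝ≥0∞} (hw : Measurable w) (hΦ : ∀ i j, Measurable (Φ i j))
    (i j : ι) :
    ∫⁻ t in Ioi 0, w t * ∑' n, halfConvIter Φ n i j t
      = ∑' n, momentMatrix w (halfConvIter Φ n) i j := by
  simp_rw [← ENNReal.tsum_mul_left]
  exact lintegral_tsum fun n => (hw.mul (measurable hΦ n i j)).aemeasurable

variable [DecidableEq ι]

theorem massMatrix_eq (hΦ : ∀ i j, Measurable (Φ i j)) (n : ℕ) :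
    massMatrix (halfConvIter Φ n) = massMatrix Φ ^ (n + 1) := by
  induction n with
  | zero => rw [zero_add, pow_one]; rfl
  | succ n ih =>
    ext i j
    rw [pow_succ', Matrix.mul_apply, massMatrix, Matrix.of_apply, halfConvIter,
      lintegral_finsetSum _ fun k _ => (hΦ i k).halfConv (measurable hΦ n k j)]
    refine Finset.sum_congr rfl fun k _ => ?_
    rw [lintegral_halfConv (hΦ i k) (measurable hΦ n k j), ← ih]
    rfl

theorem momentMatrix_le (w : ℝ → ℝ≥0∞) (hw : Measurable w) (hΦ : ∀ i j, Measurable (Φ i j))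
    (hsub : ∀ s t, 0 < s → s ≤ t → w t ≤ w (t - s) + w s) (n : ℕ) (i j : ι) :
    momentMatrix w (halfConvIter Φ n) i j ≤
      (∑ x ∈ antidiagonal n, massMatrix Φ ^ x.1 * momentMatrix w Φ * massMatrix Φ ^ x.2) i j := by
  induction n generalizing i j with
  | zero => simp [halfConvIter]
  | succ n ih =>
    rw [momentMatrix_succ_apply w hw hΦ, sum_antidiagonal_succ_pow_mul_pow, Matrix.add_apply,
      Matrix.mul_apply, Matrix.mul_apply, ← Finset.sum_add_distrib, ← massMatrix_eq hΦ]
    refine Finset.sum_le_sum fun k _ => ?_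
    refine (lintegral_mul_halfConv_le w hw (hΦ i k) (measurable hΦ n k j) hsub).trans ?_
    exact add_le_add le_rfl (mul_le_mul_right (ih k j) _)

theorem momentMatrix_eq (w : ℝ → ℝ≥0∞) (hw : Measurable w) (hΦ : ∀ i j, Measurable (Φ i j))
    (hadd : ∀ s t, 0 < s → s ≤ t → w t = w (t - s) + w s) (n : ℕ) :
    momentMatrix w (halfConvIter Φ n) =
      ∑ x ∈ antidiagonal n, massMatrix Φ ^ x.1 * momentMatrix w Φ * massMatrix Φ ^ x.2 := by
  induction n with
  | zero => simp [halfConvIter]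
  | succ n ih =>
    ext i j
    rw [momentMatrix_succ_apply w hw hΦ, sum_antidiagonal_succ_pow_mul_pow, Matrix.add_apply,
      Matrix.mul_apply, Matrix.mul_apply, ← Finset.sum_add_distrib, ← massMatrix_eq hΦ, ← ih]
    refine Finset.sum_congr rfl fun k _ => ?_
    exact lintegral_mul_halfConv_eq w hw (hΦ i k) (measurable hΦ n k j) hadd

end halfConvIter

def ofRealKernel {ι : Type*} (φ : ι → ι → ℝ → ℝ) : ι → ι → ℝ → ℝ≥0∞ :=
  fun i j t => ENNReal.ofReal (φ i j t)

theorem measurable_ofRealKernel {ι : Type*} {φ : ι → ι → ℝ → ℝ} (hφm : ∀ i j, Measurable (φ i j))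
    (i j : ι) : Measurable (ofRealKernel φ i j) :=
  (hφm i j).ennreal_ofReal

theorem momentMatrix_ofRealKernel {ι : Type*} {φ : ι → ι → ℝ → ℝ} {v : ℝ → ℝ}
    (hφ : ∀ i j t, 0 ≤ φ i j t) (hv : ∀ t ∈ Ioi (0 : ℝ), 0 ≤ v t)
    (hint : ∀ i j, IntegrableOn (fun t => v t * φ i j t) (Ioi 0)) :
    momentMatrix (fun t => ENNReal.ofReal (v t)) (ofRealKernel φ)
      = (Matrix.of fun i j => ∫ t in Ioi 0, v t * φ i j t).map ENNReal.ofReal := by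
  ext i j
  rw [Matrix.map_apply, Matrix.of_apply, ofReal_integral_eq_lintegral_ofReal (hint i j)
    (ae_restrict_of_forall_mem measurableSet_Ioi fun t ht => mul_nonneg (hv t ht) (hφ i j t))]
  exact lintegral_congr fun t => (ENNReal.ofReal_mul' (hφ i j t)).symm

section Kernel

variable {d : ℕ} {φ : Fin d → Fin d → ℝ → ℝ}

theorem massMatrix_ofRealKernel (hφ : ∀ i j t, 0 ≤ φ i j t)
    (hint : ∀ i j, IntegrableOn (φ i j) (Ioi 0)) :
    massMatrix (ofRealKernel φ) = (Kmat d φ).map ENNReal.ofReal := by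
  ext i j
  exact (ofReal_integral_eq_lintegral_ofReal (hint i j) (ae_of_all _ (hφ i j))).symm

theorem Kmat_nonneg (hφ : ∀ i j t, 0 ≤ φ i j t) (i j : Fin d) : 0 ≤ Kmat d φ i j :=
  setIntegral_nonneg measurableSet_Ioi fun t _ => hφ i j t

theorem tsum_sum_antidiagonal_mass_moment_apply (hφ : ∀ i j t, 0 ≤ φ i j t)
    (hint : ∀ i j, IntegrableOn (φ i j) (Ioi 0))
    (hρ : spectralRadius ℂ ((Kmat d φ).map fun x : ℝ => (x : ℂ)) < 1) {v : ℝ → ℝ}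
    (hv : ∀ t ∈ Ioi (0 : ℝ), 0 ≤ v t) (hmom : ∀ i j, IntegrableOn (fun t => v t * φ i j t) (Ioi 0))
    (i j : Fin d) :
    ∑' n, (∑ x ∈ antidiagonal n, massMatrix (ofRealKernel φ) ^ x.1
        * momentMatrix (fun t => ENNReal.ofReal (v t)) (ofRealKernel φ)
        * massMatrix (ofRealKernel φ) ^ x.2) i j
      = ENNReal.ofReal (((1 - Kmat d φ)⁻¹ * (Matrix.of fun i j => ∫ t in Ioi 0, v t * φ i j t)
          * (1 - Kmat d φ)⁻¹) i j) := by
  have hB : ∀ i j, 0 ≤ ∫ t in Ioi 0, v t * φ i j t := fun i j =>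
    setIntegral_nonneg measurableSet_Ioi fun t ht => mul_nonneg (hv t ht) (hφ i j t)
  rw [massMatrix_ofRealKernel hφ hint, momentMatrix_ofRealKernel hφ hv hmom,
    ← Matrix.ennreal_tsum_apply]
  exact congrFun₂ (Matrix.map_ofReal_inv_one_sub_mul_mul_inv_one_sub (Kmat_nonneg hφ) hB
    (Matrix.summable_pow_of_spectralRadius_map_lt_one hρ)).symm i j

theorem phiIter_nonneg (hφ : ∀ i j t, 0 ≤ φ i j t) (n : ℕ) (i j : Fin d) (t : ℝ) :
    0 ≤ phiIter d φ n i j t := by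
  induction n generalizing i j t with
  | zero => exact hφ i j t
  | succ n ih =>
    exact Finset.sum_nonneg fun k _ => integral_nonneg fun s => mul_nonneg (hφ i k _) (ih k j s)

theorem phiIter_succ_eq_sum_toReal_halfConv (hφm : ∀ i j, Measurable (φ i j))
    (hφ : ∀ i j t, 0 ≤ φ i j t) {n : ℕ} (hn : ∀ k j, Measurable (phiIter d φ n k j))
    (i j : Fin d) (t : ℝ) :
    phiIter d φ (n + 1) i j t
      = ∑ k, (halfConv (ofRealKernel φ i k) (ofRealKernel (phiIter d φ n) k j) t).toReal := by
  refine Finset.sum_congr rfl fun k _ => ?_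
  rw [integral_eq_lintegral_of_nonneg_ae
    (ae_of_all _ fun s => mul_nonneg (hφ i k _) (phiIter_nonneg hφ n k j s))
    (by fun_prop), halfConv]
  exact congrArg _ (lintegral_congr fun s => ENNReal.ofReal_mul (hφ i k _))

theorem measurable_phiIter (hφm : ∀ i j, Measurable (φ i j)) (hφ : ∀ i j t, 0 ≤ φ i j t)
    (n : ℕ) (i j : Fin d) : Measurable (phiIter d φ n i j) := by
  induction n generalizing i j with
  | zero => exact hφm i j
  | succ n ih =>
    rw [funext (phiIter_succ_eq_sum_toReal_halfConv hφm hφ ih i j)]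
    exact Finset.measurable_sum _ fun k _ =>
      (((hφm i k).ennreal_ofReal).halfConv (ih k j).ennreal_ofReal).ennreal_toReal

/-- The real integral defining `phiIter` agrees with its `lintegral` only where the latter is
finite; this holds almost everywhere because `∫ Φₙ₊₁ = K ^ (n + 2)` is finite. -/
theorem ofRealKernel_phiIter_ae_eq (hφm : ∀ i j, Measurable (φ i j)) (hφ : ∀ i j t, 0 ≤ φ i j t)
    (hint : ∀ i j, IntegrableOn (φ i j) (Ioi 0)) (n : ℕ) (i j : Fin d) :
    ofRealKernel (phiIter d φ n) i j =ᵐ[volume.restrict (Ioi 0)]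
      halfConvIter (ofRealKernel φ) n i j := by
  have hΦ := measurable_ofRealKernel hφm
  induction n generalizing i j with
  | zero => rfl
  | succ n ih =>
    have hfin : ∀ᵐ t ∂volume.restrict (Ioi 0), halfConvIter (ofRealKernel φ) (n + 1) i j t < ⊤ := by
      refine ae_lt_top (halfConvIter.measurable hΦ _ i j) ?_
      have := congrFun₂ (halfConvIter.massMatrix_eq hΦ (n + 1)) i j
      rw [massMatrix, Matrix.of_apply] at this
      rw [this, massMatrix_ofRealKernel hφ hint, ← Matrix.map_ofReal_pow (Kmat_nonneg hφ)]
      exact ENNReal.ofReal_ne_top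
    filter_upwards [hfin] with t ht
    have hconv : halfConvIter (ofRealKernel φ) (n + 1) i j t
        = ∑ k, halfConv (ofRealKernel φ i k) (ofRealKernel (phiIter d φ n) k j) t :=
      Finset.sum_congr rfl fun k _ => halfConv_congr_ae (ih k j).symm t
    rw [hconv] at ht ⊢
    rw [ofRealKernel, phiIter_succ_eq_sum_toReal_halfConv hφm hφ (measurable_phiIter hφm hφ n),
      ← ENNReal.toReal_sum fun k _ => ne_top_of_le_ne_top ht.ne
        (Finset.single_le_sum (fun k _ => zero_le) (Finset.mem_univ k)),
      ENNReal.ofReal_toReal ht.ne]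

theorem psiFun_nonneg (hφ : ∀ i j t, 0 ≤ φ i j t) (i j : Fin d) (t : ℝ) :
    0 ≤ psiFun d φ i j t :=
  tsum_nonneg fun n => phiIter_nonneg hφ n i j t

theorem lintegral_ofReal_mul_psiFun_le (hφm : ∀ i j, Measurable (φ i j))
    (hφ : ∀ i j t, 0 ≤ φ i j t) (hint : ∀ i j, IntegrableOn (φ i j) (Ioi 0)) {v : ℝ → ℝ}
    (hv : Measurable v) (i j : Fin d) :
    ∫⁻ t in Ioi 0, ENNReal.ofReal (v t * psiFun d φ i j t)
      ≤ ∑' n, momentMatrix (fun t => ENNReal.ofReal (v t))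
          (halfConvIter (ofRealKernel φ) n) i j := by
  rw [← halfConvIter.lintegral_mul_tsum (w := fun t => ENNReal.ofReal (v t)) hv.ennreal_ofReal
    (measurable_ofRealKernel hφm)]
  refine lintegral_mono_ae ?_
  filter_upwards [ae_all_iff.2 fun n => ofRealKernel_phiIter_ae_eq hφm hφ hint n i j] with t ht
  rw [ENNReal.ofReal_mul' (psiFun_nonneg hφ i j t), ← tsum_congr ht]
  exact mul_le_mul_right (ENNReal.ofReal_tsum_le fun n => phiIter_nonneg hφ n i j t) _

/-- `psiFun` is a real `tsum`, hence `0` wherever the series diverges; a finite moment rules this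
out almost everywhere, which is what upgrades the inequality to an equality. -/
theorem lintegral_ofReal_mul_psiFun_eq (hφm : ∀ i j, Measurable (φ i j))
    (hφ : ∀ i j t, 0 ≤ φ i j t) (hint : ∀ i j, IntegrableOn (φ i j) (Ioi 0)) {v : ℝ → ℝ}
    (hv : Measurable v) (hv0 : ∀ t ∈ Ioi (0 : ℝ), 0 < v t) (i j : Fin d)
    (hfin : ∑' n, momentMatrix (fun t => ENNReal.ofReal (v t))
      (halfConvIter (ofRealKernel φ) n) i j ≠ ⊤) :
    ∫⁻ t in Ioi 0, ENNReal.ofReal (v t * psiFun d φ i j t)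
      = ∑' n, momentMatrix (fun t => ENNReal.ofReal (v t))
          (halfConvIter (ofRealKernel φ) n) i j := by
  have hΦ := measurable_ofRealKernel hφm
  rw [← halfConvIter.lintegral_mul_tsum (w := fun t => ENNReal.ofReal (v t)) hv.ennreal_ofReal hΦ]
    at hfin ⊢
  have hlt := ae_lt_top (f := fun t => ENNReal.ofReal (v t) * ∑' n, halfConvIter _ n i j t)
    (hv.ennreal_ofReal.mul (Measurable.tsum fun n => halfConvIter.measurable hΦ n i j)) hfin
  refine lintegral_congr_ae ?_
  filter_upwards [ae_all_iff.2 fun n => ofRealKernel_phiIter_ae_eq hφm hφ hint n i j, hlt,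
    ae_restrict_mem measurableSet_Ioi] with t ht hlt ht0
  rw [← tsum_congr ht] at hlt ⊢
  rw [ENNReal.ofReal_mul' (psiFun_nonneg hφ i j t), psiFun, ENNReal.ofReal_tsum_of_tsum_ne_top
    (fun n => phiIter_nonneg hφ n i j t)
    (ENNReal.lt_top_of_mul_ne_top_right hlt.ne (ENNReal.ofReal_pos.2 (hv0 t ht0)).ne').ne]
  rfl

end Kernel

/-- For `p ∈ [0,1]` with `∫_0^∞ t^p φ(t) dt < ∞` componentwise, one has
`∫_0^∞ t^p ψ(t) dt ≤ (Id−K)⁻¹ (∫_0^∞ t^p φ(t) dt) (Id−K)⁻¹` componentwise, with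
equality when `p = 1`. -/
theorem psi_moment_bound (d : ℕ) (φ : Fin d → Fin d → ℝ → ℝ)
    (hφmeas : ∀ i j, Measurable (φ i j)) (hφnonneg : ∀ i j t, 0 ≤ φ i j t)
    (hA1 : A1 d φ) (p : ℝ) (hp : p ∈ Icc (0 : ℝ) 1)
    (hmom : ∀ i j, IntegrableOn (fun t => t ^ p * φ i j t) (Ioi 0)) :
    (∀ i j,
      ∫⁻ t in Ioi (0 : ℝ), ENNReal.ofReal (t ^ p * psiFun d φ i j t)
        ≤ ENNReal.ofReal
            (((1 - Kmat d φ)⁻¹ *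
                (Matrix.of fun i j => ∫ t in Ioi (0 : ℝ), t ^ p * φ i j t) *
                (1 - Kmat d φ)⁻¹) i j)) ∧
    (p = 1 → ∀ i j,
      ∫⁻ t in Ioi (0 : ℝ), ENNReal.ofReal (t ^ p * psiFun d φ i j t)
        = ENNReal.ofReal
            (((1 - Kmat d φ)⁻¹ *
                (Matrix.of fun i j => ∫ t in Ioi (0 : ℝ), t ^ p * φ i j t) *
                (1 - Kmat d φ)⁻¹) i j)) := by
  obtain ⟨hint, hρ⟩ := hA1
  have hv : Measurable fun t : ℝ => t ^ p := measurable_id.pow_const p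
  have hΦ := measurable_ofRealKernel hφmeas
  have hRHS := tsum_sum_antidiagonal_mass_moment_apply hφnonneg hint hρ
    (fun t ht => Real.rpow_nonneg ht.le p) hmom
  refine ⟨fun i j => ?_, fun hp1 i j => ?_⟩
  · calc _ ≤ ∑' n, momentMatrix _ (halfConvIter (ofRealKernel φ) n) i j :=
          lintegral_ofReal_mul_psiFun_le hφmeas hφnonneg hint hv i j
      _ ≤ _ := ENNReal.tsum_le_tsum fun n => halfConvIter.momentMatrix_le _ hv.ennreal_ofReal hΦ
          (fun s t hs hst => ENNReal.ofReal_rpow_le_ofReal_rpow_sub_add hp hs hst) n i j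
      _ = _ := hRHS i j
  · have hadd (s t : ℝ) (hs : 0 < s) (hst : s ≤ t) :
        ENNReal.ofReal (t ^ p) = ENNReal.ofReal ((t - s) ^ p) + ENNReal.ofReal (s ^ p) := by
      rw [hp1, Real.rpow_one, Real.rpow_one, Real.rpow_one,
        ← ENNReal.ofReal_add (sub_nonneg.2 hst) hs.le, sub_add_cancel]
    have hsum := (tsum_congr fun n => congrFun₂
      (halfConvIter.momentMatrix_eq _ hv.ennreal_ofReal hΦ hadd n) i j).trans (hRHS i j)
    rw [lintegral_ofReal_mul_psiFun_eq hφmeas hφnonneg hint hv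
      (fun t ht => Real.rpow_pos_of_pos ht p) i j (hsum ▸ ENNReal.ofReal_ne_top), hsum]
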